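/- arXiv:2106.00402 — 4 statements merged into one kernel-verified Lean document; each statement's English description precedes it below -/
import Mathlib

section
/- Let n ≥ 1 be an integer and μ > 0. Let X_1, …, X_n be real-valued random variables on a common probability space (no independence is assumed) such that each X_i is exponentially distributed with rate μ. Then the expected value of the maximum satisfies E[max_{1 ≤ i ≤ n} X_i] ≤ (1/μ)(1 + log n). -/
/-!
Split the maximum at the level `a = log n / μ`: pointwise `max_i X i ≤ a + ∑ i (X i - a)⁺`,
and this bound survives any dependence between the `X i` because expectation is linear.
By the layer-cake formula, `E (X i - a)⁺ = ∫_{t > 0} P(X i > a + t) dt = e^{-μa} / μ`,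
which is `1 / (nμ)` for this choice of `a`, so the `n` correction terms add up to `1 / μ`.
-/

open MeasureTheory ProbabilityTheory Real Set

lemma Real.iSup_le_add_sum_posPart_sub {ι : Type*} [Fintype ι] (f : ι → ℝ) {a : ℝ}
    (ha : 0 ≤ a) : ⨆ i, f i ≤ a + ∑ i, (f i - a)⁺ := by
  refine Real.iSup_le (fun i => ?_) <|
    add_nonneg ha (Finset.sum_nonneg fun j _ => posPart_nonneg _)
  calc f i ≤ a + (f i - a)⁺ := by linarith [le_posPart (f i - a)]
    _ ≤ a + ∑ j, (f j - a)⁺ := by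
      gcongr
      exact Finset.single_le_sum (f := fun j => (f j - a)⁺) (fun j _ => posPart_nonneg _)
        (Finset.mem_univ i)

lemma Real.mul_exp_neg_log_le_one {x : ℝ} (hx : 0 ≤ x) : x * exp (-log x) ≤ 1 := by
  rcases hx.eq_or_lt with rfl | hx
  · simp
  · rw [exp_neg, exp_log hx, mul_inv_cancel₀ hx.ne']

lemma integral_iSup_le_add_sum_integral_posPart_sub {Ω ι : Type*} [MeasurableSpace Ω]
    {P : Measure Ω} [IsProbabilityMeasure P] [Fintype ι] {X : ι → Ω → ℝ} {a : ℝ}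
    (ha : 0 ≤ a) (hX : ∀ i, 0 ≤ᵐ[P] X i)
    (hint : ∀ i, Integrable (fun ω => (X i ω - a)⁺) P) :
    ∫ ω, ⨆ i, X i ω ∂P ≤ a + ∑ i, ∫ ω, (X i ω - a)⁺ ∂P := by
  have hsum : Integrable (fun ω => ∑ i, (X i ω - a)⁺) P :=
    integrable_finsetSum _ fun i _ => hint i
  have hsup : 0 ≤ᵐ[P] fun ω => ⨆ i, X i ω := by
    filter_upwards [ae_all_iff.2 hX] with ω hω using Real.iSup_nonneg hω
  calc ∫ ω, ⨆ i, X i ω ∂P ≤ ∫ ω, a + ∑ i, (X i ω - a)⁺ ∂P :=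
        integral_mono_of_nonneg hsup ((integrable_const a).add hsum)
          (ae_of_all _ fun ω => Real.iSup_le_add_sum_posPart_sub _ ha)
    _ = a + ∑ i, ∫ ω, (X i ω - a)⁺ ∂P := by
        rw [integral_add (integrable_const a) hsum, integral_finsetSum _ fun i _ => hint i]
        simp

lemma lintegral_posPart_sub_eq_lintegral_measure_Ioi (ν : Measure ℝ) (a : ℝ) :
    ∫⁻ x, ENNReal.ofReal (x - a)⁺ ∂ν = ∫⁻ t in Ioi 0, ν (Ioi (a + t)) := by
  rw [lintegral_eq_lintegral_meas_lt ν (ae_of_all _ fun x => posPart_nonneg _) (by fun_prop)]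
  refine setLIntegral_congr_fun measurableSet_Ioi fun t (ht : 0 < t) => ?_
  congr 1
  ext x
  simp only [mem_ofPred_eq, mem_Ioi, posPart, lt_max_iff, ht.not_gt, or_false]
  exact lt_sub_iff_add_lt'

lemma expMeasure_Ioi {μ t : ℝ} (hμ : 0 < μ) (ht : 0 ≤ t) :
    expMeasure μ (Ioi t) = ENNReal.ofReal (exp (-(μ * t))) := by
  have := isProbabilityMeasure_expMeasure hμ
  have hcdf : 0 ≤ 1 - exp (-(μ * t)) :=
    sub_nonneg.2 <| exp_le_one_iff.2 <| neg_nonpos.2 <| by positivity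
  rw [← compl_Iic, prob_compl_eq_one_sub measurableSet_Iic, ← ofReal_cdf, cdf_expMeasure_eq hμ,
    if_pos ht, ← ENNReal.ofReal_one, ← ENNReal.ofReal_sub _ hcdf, sub_sub_cancel]

lemma ae_pos_expMeasure {μ : ℝ} (hμ : 0 < μ) : ∀ᵐ x ∂expMeasure μ, 0 < x := by
  have := isProbabilityMeasure_expMeasure hμ
  simp only [ae_iff, not_lt]
  change expMeasure μ (Iic 0) = 0
  simp [← ofReal_cdf, cdf_expMeasure_eq hμ]

lemma lintegral_posPart_sub_expMeasure {μ a : ℝ} (hμ : 0 < μ) (ha : 0 ≤ a) :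
    ∫⁻ x, ENNReal.ofReal (x - a)⁺ ∂expMeasure μ =
      ENNReal.ofReal (exp (-(μ * a)) / μ) := by
  have htail : ∀ t ∈ Ioi (0 : ℝ), expMeasure μ (Ioi (a + t)) =
      ENNReal.ofReal (exp (-(μ * a)) * exp (-μ * t)) := fun t (ht : 0 < t) => by
    rw [expMeasure_Ioi hμ (by linarith), ← exp_add]
    ring_nf
  have hint : IntegrableOn (fun t => exp (-(μ * a)) * exp (-μ * t)) (Ioi 0) :=
    (integrableOn_exp_mul_Ioi (neg_neg_of_pos hμ) 0).const_mul _
  rw [lintegral_posPart_sub_eq_lintegral_measure_Ioi,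
    setLIntegral_congr_fun measurableSet_Ioi htail,
    ← ofReal_integral_eq_lintegral_ofReal hint (ae_of_all _ fun t => by positivity),
    integral_const_mul, integral_exp_mul_Ioi (neg_neg_of_pos hμ)]
  simp [div_eq_mul_inv]

lemma integrable_posPart_sub_expMeasure {μ a : ℝ} (hμ : 0 < μ) (ha : 0 ≤ a) :
    Integrable (fun x => (x - a)⁺) (expMeasure μ) :=
  (lintegral_ofReal_ne_top_iff_integrable (by fun_prop) (ae_of_all _ fun _ => posPart_nonneg _)).1
    (by simp [lintegral_posPart_sub_expMeasure hμ ha])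

lemma integral_posPart_sub_expMeasure {μ a : ℝ} (hμ : 0 < μ) (ha : 0 ≤ a) :
    ∫ x, (x - a)⁺ ∂expMeasure μ = exp (-(μ * a)) / μ := by
  rw [integral_eq_lintegral_of_nonneg_ae (ae_of_all _ fun _ => posPart_nonneg _) (by fun_prop),
    lintegral_posPart_sub_expMeasure hμ ha, ENNReal.toReal_ofReal (by positivity)]

theorem expected_max_of_exponentials_le_general
    {Ω : Type*} [MeasureSpace Ω] [IsProbabilityMeasure (ℙ : Measure Ω)]
    (n : ℕ) (μ : ℝ) (hμ : 0 < μ)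
    (X : Fin n → Ω → ℝ) (hX : ∀ i, Measurable (X i))
    (hdist : ∀ i, Measure.map (X i) ℙ = expMeasure μ) :
    ∫ ω, (⨆ i, X i ω) ∂ℙ ≤ (1 / μ) * (1 + Real.log n) := by
  set a := log n / μ
  have ha : 0 ≤ a := div_nonneg (log_natCast_nonneg n) hμ.le
  have hnonneg : ∀ i, 0 ≤ᵐ[ℙ] X i := fun i =>
    ae_of_ae_map (p := fun x => 0 ≤ x) (hX i).aemeasurable <| by
      rw [hdist i]
      filter_upwards [ae_pos_expMeasure hμ] with x hx using hx.le
  have hint : ∀ i, Integrable (fun ω => (X i ω - a)⁺) ℙ := fun i =>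
    (integrable_map_measure (g := fun x => (x - a)⁺) (by fun_prop) (hX i).aemeasurable).1 <| by
      rw [hdist i]
      exact integrable_posPart_sub_expMeasure hμ ha
  have hmean : ∀ i, ∫ ω, (X i ω - a)⁺ = exp (-log n) / μ := fun i => by
    rw [← integral_map (f := fun x => (x - a)⁺) (hX i).aemeasurable (by fun_prop), hdist i,
      integral_posPart_sub_expMeasure hμ ha, mul_div_cancel₀ _ hμ.ne']
  calc ∫ ω, (⨆ i, X i ω) ≤ a + ∑ i, ∫ ω, (X i ω - a)⁺ :=
        integral_iSup_le_add_sum_integral_posPart_sub ha hnonneg hint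
    _ = (log n + n * exp (-log n)) / μ := by
        simp only [hmean, Finset.sum_const, Finset.card_univ, Fintype.card_fin, nsmul_eq_mul, a]
        ring
    _ ≤ (1 / μ) * (1 + log n) := by
        rw [one_div_mul_eq_div, add_comm 1]
        gcongr
        exact mul_exp_neg_log_le_one n.cast_nonneg

/-- If `X 1, …, X n` are (possibly dependent) real random variables on a common
probability space, each exponentially distributed with rate `μ > 0`, then
`E[max_i X i] ≤ (1/μ)(1 + log n)`. -/
theorem expected_max_of_exponentials_le
    {Ω : Type*} [MeasureSpace Ω] [IsProbabilityMeasure (ℙ : Measure Ω)]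
    (n : ℕ) (hn : 1 ≤ n) (μ : ℝ) (hμ : 0 < μ)
    (X : Fin n → Ω → ℝ) (hX : ∀ i, Measurable (X i))
    (hdist : ∀ i, Measure.map (X i) ℙ = expMeasure μ) :
    ∫ ω, (⨆ i, X i ω) ∂ℙ ≤ (1 / μ) * (1 + Real.log n) :=
  expected_max_of_exponentials_le_general n μ hμ X hX hdist
end

section
/- Let k ≥ 1 and 0 ≤ d ≤ k − 1 be integers, and let c_0, c_1, …, c_d be independent random variables each distributed uniformly on the k-element set Fin k. Then P(∃ j ∈ {1, …, d}, c_j = c_0) = 1 − (1 − 1/k)^d, and this probability is at most 1 − 1/e. -/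
/-!
Condition on the color `a` of `c 0`: by independence, the event that `c 0 = a` and no other
`c j` equals `a` has probability `k⁻¹ (1 - k⁻¹)^d`, and summing over the `k` values of `a` gives
`(1 - 1/k)^d` for the complement of a conflict. The bound comes from
`(1 - 1/(n+1))^n = (1 + 1/n)^(-n) ≥ e⁻¹`.
-/

open MeasureTheory ProbabilityTheory
open scoped ENNReal

lemma Real.exp_neg_one_le_one_sub_inv_pow (n : ℕ) :
    Real.exp (-1) ≤ (1 - ((n : ℝ) + 1)⁻¹) ^ n := by
  rcases Nat.eq_zero_or_pos n with rfl | hn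
  · simp
  have hbase : 1 - ((n : ℝ) + 1)⁻¹ = (1 + (n : ℝ)⁻¹)⁻¹ := by field_simp; ring
  rw [hbase, inv_pow, Real.exp_neg]
  exact inv_anti₀ (by positivity) Real.one_add_inv_pow_le_exp

lemma Real.exp_neg_one_le_one_sub_inv_pow_of_lt {k d : ℕ} (hdk : d < k) :
    Real.exp (-1) ≤ (1 - (k : ℝ)⁻¹) ^ d := by
  obtain ⟨n, rfl⟩ : ∃ n, k = n + 1 := Nat.exists_eq_succ_of_ne_zero (by omega)
  have hinv : ((n : ℝ) + 1)⁻¹ ≤ 1 := inv_le_one_of_one_le₀ (by linarith [n.cast_nonneg (α := ℝ)])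
  push_cast
  exact (Real.exp_neg_one_le_one_sub_inv_pow n).trans
    (pow_le_pow_of_le_one (sub_nonneg.2 hinv) (sub_le_self _ (by positivity)) (by omega))

namespace ProbabilityTheory

variable {Ω α : Type*} [MeasurableSpace Ω] [MeasurableSpace α] [MeasurableSingletonClass α]
  {μ : Measure Ω} {d : ℕ} {c : Fin (d + 1) → Ω → α}

lemma iIndepFun.measure_eq_and_forall_succ_ne (hc : iIndepFun c μ) (a : α) :
    μ {ω | c 0 ω = a ∧ ∀ j : Fin d, c j.succ ω ≠ a}
      = μ {ω | c 0 ω = a} * ∏ j : Fin d, μ {ω | c j.succ ω ≠ a} := by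
  let t : Fin (d + 1) → Set α := Fin.cons {a} fun _ ↦ {a}ᶜ
  have ht : ∀ j, MeasurableSet (t j) :=
    Fin.cases (measurableSet_singleton a) fun _ ↦ (measurableSet_singleton a).compl
  have hevent : {ω | c 0 ω = a ∧ ∀ j : Fin d, c j.succ ω ≠ a} = ⋂ j, c j ⁻¹' t j := by
    ext ω
    simp [Fin.forall_fin_succ, t]
  rw [hevent, hc.meas_iInter fun j ↦ ⟨t j, ht j, rfl⟩, Fin.prod_univ_succ]
  rfl

lemma iIndepFun.measure_forall_succ_ne_zero [Fintype α] (hmeas : ∀ j, Measurable (c j))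
    (hc : iIndepFun c μ) :
    μ {ω | ∀ j : Fin d, c j.succ ω ≠ c 0 ω}
      = ∑ a, μ {ω | c 0 ω = a} * ∏ j : Fin d, μ {ω | c j.succ ω ≠ a} := by
  let E : α → Set Ω := fun a ↦ {ω | c 0 ω = a ∧ ∀ j : Fin d, c j.succ ω ≠ a}
  have hunion : {ω | ∀ j : Fin d, c j.succ ω ≠ c 0 ω} = ⋃ a, E a := by
    ext ω
    simp [E]
  have hdisj : Pairwise (Function.onFun Disjoint E) := fun a b hab ↦
    Set.disjoint_left.2 fun ω ha hb ↦ hab (ha.1.symm.trans hb.1)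
  have hE : ∀ a, MeasurableSet (E a) := by
    intro a
    simp only [E, Set.ofPred_and, Set.ofPred_forall]
    exact (hmeas 0 (measurableSet_singleton a)).inter
      (.iInter fun j ↦ (hmeas j.succ (measurableSet_singleton a)).compl)
  rw [hunion, measure_iUnion hdisj hE, tsum_fintype]
  simp_rw [E, hc.measure_eq_and_forall_succ_ne]

lemma iIndepFun.measure_forall_succ_ne_zero_of_uniform [Fintype α] [Nonempty α]
    [IsProbabilityMeasure μ] (hmeas : ∀ j, Measurable (c j)) (hc : iIndepFun c μ)
    (hunif : ∀ j a, μ {ω | c j ω = a} = (Fintype.card α : ℝ≥0∞)⁻¹) :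
    μ {ω | ∀ j : Fin d, c j.succ ω ≠ c 0 ω} = (1 - (Fintype.card α : ℝ≥0∞)⁻¹) ^ d := by
  have hne : ∀ j a, μ {ω | c j ω ≠ a} = 1 - (Fintype.card α : ℝ≥0∞)⁻¹ := by
    intro j a
    rw [← hunif j a]
    exact prob_compl_eq_one_sub (hmeas j (measurableSet_singleton a))
  simp only [hc.measure_forall_succ_ne_zero hmeas, hunif, hne, Finset.prod_const,
    Finset.card_univ, Fintype.card_fin, Finset.sum_const, nsmul_eq_mul, ← mul_assoc]
  rw [ENNReal.mul_inv_cancel (by simp) (by simp), one_mul]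

end ProbabilityTheory

/-- If `c 0, c 1, …, c d` are independent uniform colors from a palette of `k ≥ d + 1`
colors, then the probability that some `c j` with `j ≠ 0` coincides with `c 0` equals
`1 - (1 - 1/k)^d`, which is at most `1 - 1/e`. -/
theorem prob_first_round_conflict
    {Ω : Type*} [MeasureSpace Ω] [IsProbabilityMeasure (ℙ : Measure Ω)]
    (k d : ℕ) (hk : 1 ≤ k) (hd : d ≤ k - 1)
    (c : Fin (d + 1) → Ω → Fin k)
    (hmeas : ∀ j, Measurable (c j))
    (hindep : iIndepFun c ℙ)
    (hunif : ∀ j, ∀ a : Fin k, ℙ {ω | c j ω = a} = (k : ℝ≥0∞)⁻¹) :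
    (ℙ {ω | ∃ j : Fin (d + 1), j ≠ 0 ∧ c j ω = c 0 ω}).toReal
        = 1 - ((1 : ℝ) - 1 / k) ^ d ∧
    (ℙ {ω | ∃ j : Fin (d + 1), j ≠ 0 ∧ c j ω = c 0 ω}).toReal
        ≤ 1 - 1 / Real.exp 1 := by
  have : Nonempty (Fin k) := ⟨⟨0, hk⟩⟩
  have hconflict : {ω | ∃ j : Fin (d + 1), j ≠ 0 ∧ c j ω = c 0 ω}
      = {ω | ∀ j : Fin d, c j.succ ω ≠ c 0 ω}ᶜ := by
    ext ω
    simp [Fin.exists_fin_succ, Fin.succ_ne_zero]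
  have hnone : ℙ {ω | ∀ j : Fin d, c j.succ ω ≠ c 0 ω} = (1 - (k : ℝ≥0∞)⁻¹) ^ d := by
    simpa using hindep.measure_forall_succ_ne_zero_of_uniform hmeas (by simpa using hunif)
  have hprob : (ℙ {ω | ∃ j : Fin (d + 1), j ≠ 0 ∧ c j ω = c 0 ω}).toReal
      = 1 - ((1 : ℝ) - 1 / k) ^ d := by
    have hmeas_none : MeasurableSet {ω | ∀ j : Fin d, c j.succ ω ≠ c 0 ω} := by
      simp only [Set.ofPred_forall]
      exact .iInter fun j ↦ (measurableSet_eq_fun (hmeas j.succ) (hmeas 0)).compl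
    have hinv : (k : ℝ≥0∞)⁻¹ ≤ 1 := ENNReal.inv_le_one.2 (by exact_mod_cast hk)
    rw [hconflict, prob_compl_eq_one_sub hmeas_none, hnone,
      ENNReal.toReal_sub_of_le (pow_le_one₀ zero_le tsub_le_self) ENNReal.one_ne_top,
      ENNReal.toReal_pow, ENNReal.toReal_sub_of_le hinv ENNReal.one_ne_top]
    simp
  refine ⟨hprob, ?_⟩
  rw [hprob, one_div, one_div, ← Real.exp_neg]
  linarith [Real.exp_neg_one_le_one_sub_inv_pow_of_lt (show d < k by omega)]
end

section
/- Let k ≥ 1 be an integer, S a nonempty subset of Fin k, and U a finite index set. For each u ∈ U let A_u ⊆ Fin k with |A_u| ≥ 2, and let (c_u)_{u ∈ U} be independent random variables with c_u distributed uniformly on A_u. Let N = |{ i ∈ S : for all u ∈ U, c_u ≠ i }| be the number of colors in S chosen by no c_u. Then E[N] ≥ |S| · 4^{−|U|/|S|}; in particular, if |U| ≤ |S| then E[N] ≥ |S|/4. -/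
/-! By linearity of expectation and independence, the expected number of unchosen colors is
`∑ i ∈ S, ∏ u, (1 - p u i)` with `p u i = ℙ (c u = i) ≤ 1/2`. On `[0, 1/2]` the chord bound
`4 ^ (-x) ≤ 1 - x` turns each product into `4 ^ (-t i)` with `t i = ∑ u, p u i`, and Jensen's
inequality for the convex function `x ↦ 4 ^ (-x)` bounds `∑ i ∈ S, 4 ^ (-t i)` below by
`|S| * 4 ^ (-(∑ i ∈ S, t i) / |S|)`. Finally `∑ i ∈ S, t i ≤ |U|`, because each `c u` puts mass at
most `1` on `S`. -/

open MeasureTheory ProbabilityTheory Finset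
open scoped ENNReal

lemma four_rpow_neg_le_one_sub {x : ℝ} (h0 : 0 ≤ x) (h1 : x ≤ 1 / 2) :
    (4 : ℝ) ^ (-x) ≤ 1 - x := by
  -- `y ↦ 4 ^ y` lies below its chord on `[-1/2, 0]`, where `4 ^ (-1/2) = 1/2`
  have hchord := (convexOn_rpow_left (b := 4) (by norm_num)).2 (Set.mem_univ (-1 / 2))
    (Set.mem_univ 0) (show 0 ≤ 2 * x by linarith) (show 0 ≤ 1 - 2 * x by linarith) (by ring)
  have hhalf : (4 : ℝ) ^ (-1 / 2 : ℝ) = 1 / 2 := by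
    rw [show (4 : ℝ) = 2 ^ (2 : ℝ) by norm_num, ← Real.rpow_mul (by norm_num)]
    norm_num
  simp only [smul_eq_mul, hhalf, Real.rpow_zero] at hchord
  calc (4 : ℝ) ^ (-x) = 4 ^ (2 * x * (-1 / 2) + (1 - 2 * x) * 0) := by ring_nf
    _ ≤ 2 * x * (1 / 2) + (1 - 2 * x) * 1 := hchord
    _ = 1 - x := by ring

lemma four_rpow_neg_sum_le_prod_one_sub {ι : Type*} (s : Finset ι) {x : ι → ℝ}
    (h0 : ∀ i ∈ s, 0 ≤ x i) (h1 : ∀ i ∈ s, x i ≤ 1 / 2) :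
    (4 : ℝ) ^ (-∑ i ∈ s, x i) ≤ ∏ i ∈ s, (1 - x i) := by
  rw [← sum_neg_distrib, Real.rpow_sum_of_pos (by norm_num)]
  exact prod_le_prod (fun i _ => by positivity)
    fun i hi => four_rpow_neg_le_one_sub (h0 i hi) (h1 i hi)

lemma ConvexOn.card_mul_map_average_le {ι : Type*} {f : ℝ → ℝ} (hf : ConvexOn ℝ Set.univ f)
    (s : Finset ι) (t : ι → ℝ) :
    #s * f ((∑ i ∈ s, t i) / #s) ≤ ∑ i ∈ s, f (t i) := by
  rcases s.eq_empty_or_nonempty with rfl | hs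
  · simp
  have hcard : (0 : ℝ) < #s := by exact_mod_cast hs.card_pos
  have hjensen := hf.map_sum_le (t := s) (w := fun _ => (#s : ℝ)⁻¹) (p := t)
    (fun _ _ => by positivity) (by simp [hcard.ne']) (fun _ _ => Set.mem_univ _)
  simp only [smul_eq_mul, inv_mul_eq_div] at hjensen
  rw [← le_div_iff₀' hcard]
  simpa only [sum_div] using hjensen

lemma convexOn_four_rpow_neg : ConvexOn ℝ Set.univ fun x : ℝ => (4 : ℝ) ^ (-x) := by
  convert convexOn_rpow_left (b := 4⁻¹) (by norm_num) using 2 with x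
  rw [Real.rpow_neg (by norm_num), Real.inv_rpow (by norm_num)]

lemma card_mul_four_rpow_neg_le_sum_prod_one_sub {U ι : Type*} [Fintype U] (s : Finset ι)
    (x : U → ι → ℝ) (h0 : ∀ u, ∀ i ∈ s, 0 ≤ x u i) (h1 : ∀ u, ∀ i ∈ s, x u i ≤ 1 / 2)
    (hsum : ∀ u, ∑ i ∈ s, x u i ≤ 1) :
    #s * (4 : ℝ) ^ (-(Fintype.card U : ℝ) / #s) ≤ ∑ i ∈ s, ∏ u, (1 - x u i) := by
  have htotal : ∑ i ∈ s, ∑ u, x u i ≤ Fintype.card U := by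
    rw [sum_comm]
    simpa using sum_le_sum fun u (_ : u ∈ univ) => hsum u
  calc #s * (4 : ℝ) ^ (-(Fintype.card U : ℝ) / #s)
      ≤ #s * (4 : ℝ) ^ (-(∑ i ∈ s, ∑ u, x u i) / #s) := by
        gcongr
        norm_num
    _ ≤ ∑ i ∈ s, (4 : ℝ) ^ (-∑ u, x u i) := by
        simpa only [neg_div] using
          convexOn_four_rpow_neg.card_mul_map_average_le s fun i => ∑ u, x u i
    _ ≤ ∑ i ∈ s, ∏ u, (1 - x u i) := sum_le_sum fun i hi =>
        four_rpow_neg_sum_le_prod_one_sub _ (fun u _ => h0 u i hi) fun u _ => h1 u i hi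

lemma toReal_ite_inv_natCast_le_half {p : Prop} [Decidable p] {n : ℕ} (hn : 2 ≤ n) :
    (if p then (n : ℝ≥0∞)⁻¹ else 0).toReal ≤ 1 / 2 := by
  split_ifs
  · rw [ENNReal.toReal_inv, ENNReal.toReal_natCast, one_div]
    exact inv_anti₀ two_pos (by exact_mod_cast hn)
  · norm_num

section Probability

variable {Ω : Type*} [MeasurableSpace Ω] {μ : Measure Ω}

lemma integral_card_filter [IsFiniteMeasure μ] {ι : Type*} (s : Finset ι) (P : ι → Ω → Prop)
    [∀ i ω, Decidable (P i ω)] (hP : ∀ i ∈ s, MeasurableSet {ω | P i ω}) :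
    ∫ ω, (#{i ∈ s | P i ω} : ℝ) ∂μ = ∑ i ∈ s, μ.real {ω | P i ω} := by
  calc ∫ ω, (#{i ∈ s | P i ω} : ℝ) ∂μ
        = ∫ ω, ∑ i ∈ s, {ω | P i ω}.indicator (fun _ => 1) ω ∂μ := by
        congr with ω
        rw [natCast_card_filter]
        simp [Set.indicator_apply]
    _ = ∑ i ∈ s, μ.real {ω | P i ω} := by
        rw [integral_finsetSum _ fun i hi => (integrable_const (1 : ℝ)).indicator (hP i hi)]
        exact sum_congr rfl fun i hi => integral_indicator_one (hP i hi)

variable [IsProbabilityMeasure μ] {U α : Type*} [MeasurableSpace α] [MeasurableSingletonClass α]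
  {c : U → Ω → α}

lemma measureReal_forall_ne_eq_prod [Fintype U] (hmeas : ∀ u, Measurable (c u))
    (hindep : iIndepFun c μ) (a : α) :
    μ.real {ω | ∀ u, c u ω ≠ a} = ∏ u, (1 - μ.real {ω | c u ω = a}) := by
  have hinter : {ω | ∀ u, c u ω ≠ a} = ⋂ u, c u ⁻¹' {a}ᶜ := by ext; simp
  rw [hinter, measureReal_def,
    hindep.meas_iInter fun u => ⟨_, (measurableSet_singleton a).compl, rfl⟩, ENNReal.toReal_prod]
  refine prod_congr rfl fun u _ => ?_
  rw [← measureReal_def, Set.preimage_compl,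
    probReal_compl_eq_one_sub (hmeas u (measurableSet_singleton a))]
  rfl

lemma sum_measureReal_eq_le_one (S : Finset α) {X : Ω → α} (hX : Measurable X) :
    ∑ a ∈ S, μ.real {ω | X ω = a} ≤ 1 :=
  (sum_measureReal_preimage_singleton S fun a _ => hX (measurableSet_singleton a)).trans_le
    measureReal_le_one

theorem card_mul_four_rpow_neg_le_integral_card_unchosen [Fintype U] [DecidableEq α]
    (S : Finset α) (hmeas : ∀ u, Measurable (c u)) (hindep : iIndepFun c μ)
    (hhalf : ∀ u a, μ.real {ω | c u ω = a} ≤ 1 / 2) :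
    #S * (4 : ℝ) ^ (-(Fintype.card U : ℝ) / #S) ≤
      ∫ ω, (#{i ∈ S | ∀ u, c u ω ≠ i} : ℝ) ∂μ := by
  have hunchosen : ∀ a, MeasurableSet {ω | ∀ u, c u ω ≠ a} := fun a => by
    simp only [Set.ofPred_forall]
    exact .iInter fun u => (hmeas u (measurableSet_singleton a)).compl
  rw [integral_card_filter S _ fun a _ => hunchosen a]
  simp_rw [measureReal_forall_ne_eq_prod hmeas hindep]
  exact card_mul_four_rpow_neg_le_sum_prod_one_sub S _ (fun _ _ _ => measureReal_nonneg)
    (fun u a _ => hhalf u a) fun u => sum_measureReal_eq_le_one S (hmeas u)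

end Probability

theorem expected_unchosen_colors_general
    {Ω : Type*} [MeasureSpace Ω] [IsProbabilityMeasure (ℙ : Measure Ω)]
    (k : ℕ) (S : Finset (Fin k))
    (U : Type*) [Fintype U]
    (A : U → Finset (Fin k)) (hA : ∀ u, 2 ≤ (A u).card)
    (c : U → Ω → Fin k) (hmeas : ∀ u, Measurable (c u))
    (hindep : iIndepFun c ℙ)
    (hunif : ∀ u, ∀ a : Fin k,
      ℙ {ω | c u ω = a} = if a ∈ A u then ((A u).card : ℝ≥0∞)⁻¹ else 0) :
    (S.card : ℝ) * (4 : ℝ) ^ (-(Fintype.card U : ℝ) / S.card)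
        ≤ (∫ ω, (((S.filter (fun i => ∀ u : U, c u ω ≠ i)).card : ℝ)) ∂ℙ) ∧
    (Fintype.card U ≤ S.card →
      (S.card : ℝ) / 4
        ≤ ∫ ω, (((S.filter (fun i => ∀ u : U, c u ω ≠ i)).card : ℝ)) ∂ℙ) := by
  have hbound := card_mul_four_rpow_neg_le_integral_card_unchosen S hmeas hindep fun u a => by
    rw [measureReal_def, hunif u a]
    exact toReal_ite_inv_natCast_le_half (hA u)
  refine ⟨hbound, fun hUS => le_trans ?_ hbound⟩
  have hexp : (-1 : ℝ) ≤ -(Fintype.card U : ℝ) / S.card := by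
    rw [neg_div, neg_le_neg_iff]
    exact div_le_one_of_le₀ (by exact_mod_cast hUS) (Nat.cast_nonneg _)
  calc (S.card : ℝ) / 4 = S.card * (4 : ℝ) ^ (-1 : ℝ) := by norm_num [div_eq_mul_inv]
    _ ≤ _ := by gcongr; norm_num

/-- Expectation estimate of Lemma 1: if each `c u` is uniform on a set `A u` of at
least two colors, independently, then the expected number of colors in `S` chosen by
no `c u` is at least `|S| * 4^(-|U|/|S|)`; in particular, it is at least `|S|/4` when
`|U| ≤ |S|`. -/
theorem expected_unchosen_colors
    {Ω : Type*} [MeasureSpace Ω] [IsProbabilityMeasure (ℙ : Measure Ω)]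
    (k : ℕ) (hk : 1 ≤ k) (S : Finset (Fin k)) (hS : S.Nonempty)
    (U : Type*) [Fintype U]
    (A : U → Finset (Fin k)) (hA : ∀ u, 2 ≤ (A u).card)
    (c : U → Ω → Fin k) (hmeas : ∀ u, Measurable (c u))
    (hindep : iIndepFun c ℙ)
    (hunif : ∀ u, ∀ a : Fin k,
      ℙ {ω | c u ω = a} = if a ∈ A u then ((A u).card : ℝ≥0∞)⁻¹ else 0) :
    (S.card : ℝ) * (4 : ℝ) ^ (-(Fintype.card U : ℝ) / S.card)
        ≤ (∫ ω, (((S.filter (fun i => ∀ u : U, c u ω ≠ i)).card : ℝ)) ∂ℙ) ∧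
    (Fintype.card U ≤ S.card →
      (S.card : ℝ) / 4
        ≤ ∫ ω, (((S.filter (fun i => ∀ u : U, c u ω ≠ i)).card : ℝ)) ∂ℙ) :=
  expected_unchosen_colors_general k S U A hA c hmeas hindep hunif
end

section
/- Let k ≥ 1 be an integer, A a nonempty subset of Fin k, and i₀ ∈ A. Let S and D be disjoint finite index sets with |S| ≤ |A| and |D| ≤ 5|A|, and for each u ∈ S ∪ D let A_u ⊆ Fin k with |A_u| ≥ 2, such that for every u ∈ D: i₀ ∉ A_u and there exists j ∈ A_u with j ∉ A. Let I, (c_u)_{u ∈ S ∪ D} be independent random variables with I uniform on A and c_u uniform on A_u. Then P(for all u ∈ S ∪ D, c_u ≠ I) ≥ 1/(4e^5). -/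
open MeasureTheory ProbabilityTheory
open scoped ENNReal
open Finset

/-!
Conditioning on the value `i` of `I`, independence turns the probability into the average over
`i ∈ A` of `∏ u, (1 - [i ∈ A u] / |A u|)`. By AM–GM this average is at least the `|A|`-th root of
`∏ u, (1 - 1/|A u|) ^ |A ∩ A u|`. For `u ∈ S` the factor is at least `(1 - 1/m) ^ m ≥ 1/4`
(Bernoulli), and for `u ∈ D` some element of `A u` lies outside `A`, so the factor is at least
`(1 - 1/m) ^ (m - 1) ≥ 1/e`. With `|S| ≤ |A|` and `|D| ≤ 5|A|` the root is at least `1/(4e⁵)`.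
-/

namespace ProbabilityTheory

variable {Ω ι U : Type*} [MeasurableSpace Ω] {μ : Measure Ω} [IsProbabilityMeasure μ]
  [MeasurableSpace ι] [MeasurableSingletonClass ι] {I : Ω → ι} {c : U → Ω → ι}

lemma iIndepFun.measureReal_eq_and_forall_ne (hc : ∀ u, Measurable (c u))
    (hindep : iIndepFun (fun o : Option U => o.elim I c) μ) (T : Finset U) (i : ι) :
    μ.real {ω | I ω = i ∧ ∀ u ∈ T, c u ω ≠ i} =
      μ.real {ω | I ω = i} * ∏ u ∈ T, (1 - μ.real {ω | c u ω = i}) := by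
  let sets : Option U → Set ι := fun o => o.elim {i} fun _ => {i}ᶜ
  have hsets : ∀ o ∈ insertNone T, MeasurableSet (sets o) := by
    rintro (_ | u) _
    exacts [measurableSet_singleton i, (measurableSet_singleton i).compl]
  have hevent : {ω | I ω = i ∧ ∀ u ∈ T, c u ω ≠ i} =
      ⋂ o ∈ insertNone T, (o.elim I c) ⁻¹' sets o := by
    ext ω
    simp only [Set.mem_ofPred_eq, Set.mem_iInter₂, forall_mem_insertNone]
    simp [sets]
  rw [hevent, measureReal_def, hindep.measure_inter_preimage_eq_mul _ hsets, prod_insertNone,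
    ENNReal.toReal_mul, ENNReal.toReal_prod]
  congr 1
  exact prod_congr rfl fun u _ => probReal_compl_eq_one_sub (hc u (measurableSet_singleton i))

lemma iIndepFun.measureReal_forall_ne_eq_sum [Fintype ι] (hI : Measurable I)
    (hc : ∀ u, Measurable (c u)) (hindep : iIndepFun (fun o : Option U => o.elim I c) μ)
    (T : Finset U) :
    μ.real {ω | ∀ u ∈ T, c u ω ≠ I ω} =
      ∑ i, μ.real {ω | I ω = i} * ∏ u ∈ T, (1 - μ.real {ω | c u ω = i}) := by
  have hunion : {ω | ∀ u ∈ T, c u ω ≠ I ω} = ⋃ i, {ω | I ω = i ∧ ∀ u ∈ T, c u ω ≠ i} := by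
    ext ω; simp
  rw [hunion, measureReal_iUnion_fintype]
  · exact sum_congr rfl fun i _ => hindep.measureReal_eq_and_forall_ne hc T i
  · exact fun i j hij => Set.disjoint_left.2 fun ω hi hj => hij (hi.1.symm.trans hj.1)
  · intro i
    simp only [Set.ofPred_and, Set.ofPred_forall]
    exact (hI (measurableSet_singleton i)).inter
      (.biInter T.countable_toSet fun u _ => (hc u (measurableSet_singleton i)).compl)

end ProbabilityTheory

namespace Real

lemma le_arith_mean_of_pow_card_le_prod {ι : Type*} {s : Finset ι} (hs : s.Nonempty) {z : ι → ℝ}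
    (hz : ∀ i ∈ s, 0 ≤ z i) {x : ℝ} (hx : 0 ≤ x) (h : x ^ #s ≤ ∏ i ∈ s, z i) :
    x ≤ ∑ i ∈ s, (#s : ℝ)⁻¹ * z i := by
  have hcard : #s ≠ 0 := hs.card_ne_zero
  calc x = (x ^ #s) ^ (#s : ℝ)⁻¹ := (pow_rpow_inv_natCast hx hcard).symm
    _ ≤ (∏ i ∈ s, z i) ^ (#s : ℝ)⁻¹ := by gcongr
    _ = ∏ i ∈ s, z i ^ (#s : ℝ)⁻¹ := (finsetProd_rpow s z hz _).symm
    _ ≤ ∑ i ∈ s, (#s : ℝ)⁻¹ * z i :=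
      geom_mean_le_arith_mean_weighted s (fun _ => (#s : ℝ)⁻¹) z (fun _ _ => by positivity)
        (by simp [hcard]) hz

lemma one_sub_inv_natCast_mem_Icc (m : ℕ) : 1 - (m : ℝ)⁻¹ ∈ Set.Icc 0 1 := by
  rcases m.eq_zero_or_pos with rfl | hm
  · simp
  exact ⟨sub_nonneg.2 (inv_le_one_of_one_le₀ (by exact_mod_cast hm)), sub_le_self _ (by positivity)⟩

lemma exp_neg_one_le_one_sub_inv_pow_s9 {m n : ℕ} (hnm : n < m) :
    exp (-1) ≤ (1 - (m : ℝ)⁻¹) ^ n := by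
  obtain ⟨p, rfl⟩ : ∃ p, m = p + 1 := ⟨m - 1, by omega⟩
  have hbase := one_sub_inv_natCast_mem_Icc (p + 1)
  calc exp (-1) ≤ (1 - ((p + 1 : ℕ) : ℝ)⁻¹) ^ p := by
        rcases p.eq_zero_or_pos with rfl | hp
        · simp
        have hinv : 1 - ((p + 1 : ℕ) : ℝ)⁻¹ = (1 + (p : ℝ)⁻¹)⁻¹ := by
          field_simp
          push_cast
          ring
        rw [hinv, inv_pow, exp_neg]
        exact inv_anti₀ (by positivity) one_add_inv_pow_le_exp
    _ ≤ (1 - ((p + 1 : ℕ) : ℝ)⁻¹) ^ n := pow_le_pow_of_le_one hbase.1 hbase.2 (by omega)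

lemma inv_four_le_one_sub_inv_pow {m n : ℕ} (hm : 2 ≤ m) (hnm : n ≤ m) :
    4⁻¹ ≤ (1 - (m : ℝ)⁻¹) ^ n := by
  have hm' : (2 : ℝ) ≤ m := by exact_mod_cast hm
  have hbase := one_sub_inv_natCast_mem_Icc m
  -- Bernoulli's inequality with the real exponent `m / 2 ≥ 1`
  have hsqrt : 2⁻¹ ≤ (1 - (m : ℝ)⁻¹) ^ ((m : ℝ) / 2) := by
    have := one_add_mul_self_le_rpow_one_add (s := -(m : ℝ)⁻¹)
      (by rw [neg_le_neg_iff]; exact inv_le_one_of_one_le₀ (by linarith)) (p := m / 2)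
      (by linarith)
    convert this using 1
    · field_simp; ring
    · rw [sub_eq_add_neg]
  calc (4 : ℝ)⁻¹ = (2⁻¹) ^ 2 := by norm_num
    _ ≤ ((1 - (m : ℝ)⁻¹) ^ ((m : ℝ) / 2)) ^ 2 := by gcongr
    _ = (1 - (m : ℝ)⁻¹) ^ m := by rw [← rpow_natCast, ← rpow_mul hbase.1]; norm_num
    _ ≤ (1 - (m : ℝ)⁻¹) ^ n := pow_le_pow_of_le_one hbase.1 hbase.2 hnm

end Real

open Real

section MissProb

variable {α : Type*} [DecidableEq α]

/-- The probability that a uniformly random element of `B` differs from `i`. -/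
noncomputable def missProb (B : Finset α) (i : α) : ℝ :=
  1 - if i ∈ B then (#B : ℝ)⁻¹ else 0

lemma prod_missProb (A B : Finset α) :
    ∏ i ∈ A, missProb B i = (1 - (#B : ℝ)⁻¹) ^ #(A ∩ B) := by
  simp only [missProb, sub_ite, sub_zero]
  rw [prod_ite_mem, prod_const]

lemma missProb_nonneg (B : Finset α) (i : α) : 0 ≤ missProb B i := by
  unfold missProb
  split_ifs
  exacts [(one_sub_inv_natCast_mem_Icc #B).1, by simp]

lemma inv_four_le_prod_missProb (A : Finset α) {B : Finset α} (hB : 2 ≤ #B) :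
    4⁻¹ ≤ ∏ i ∈ A, missProb B i := by
  rw [prod_missProb]
  exact inv_four_le_one_sub_inv_pow hB (card_le_card inter_subset_right)

lemma exp_neg_one_le_prod_missProb {A B : Finset α} (hBA : ¬B ⊆ A) :
    exp (-1) ≤ ∏ i ∈ A, missProb B i := by
  rw [prod_missProb]
  refine exp_neg_one_le_one_sub_inv_pow_s9 (card_lt_card ?_)
  exact ssubset_of_subset_of_ne inter_subset_right fun h => hBA (h ▸ inter_subset_left)

lemma inv_four_mul_exp_five_le_sum_prod_missProb {U : Type*} [DecidableEq U] {A : Finset α}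
    (hA : A.Nonempty) {S D : Finset U} (hSD : Disjoint S D) (hS : #S ≤ #A) (hD : #D ≤ 5 * #A)
    {B : U → Finset α} (hB : ∀ u ∈ S, 2 ≤ #(B u)) (hDB : ∀ u ∈ D, ¬B u ⊆ A) :
    (4 * exp 5)⁻¹ ≤ ∑ i ∈ A, (#A : ℝ)⁻¹ * ∏ u ∈ S ∪ D, missProb (B u) i := by
  refine le_arith_mean_of_pow_card_le_prod hA
    (fun i _ => prod_nonneg fun u _ => missProb_nonneg _ _) (by positivity) ?_
  have hSprod : 4⁻¹ ^ #S ≤ ∏ u ∈ S, ∏ i ∈ A, missProb (B u) i := by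
    rw [← prod_const]
    exact prod_le_prod (fun _ _ => by positivity) fun u hu =>
      inv_four_le_prod_missProb A (hB u hu)
  have hDprod : exp (-1) ^ #D ≤ ∏ u ∈ D, ∏ i ∈ A, missProb (B u) i := by
    rw [← prod_const]
    exact prod_le_prod (fun _ _ => by positivity) fun u hu =>
      exp_neg_one_le_prod_missProb (hDB u hu)
  calc (4 * exp 5)⁻¹ ^ #A = 4⁻¹ ^ #A * exp (-1) ^ (5 * #A) := by
        rw [pow_mul, ← exp_nat_mul, mul_inv, mul_pow, ← exp_neg]; norm_num
    _ ≤ 4⁻¹ ^ #S * exp (-1) ^ #D :=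
        mul_le_mul (pow_le_pow_of_le_one (by norm_num) (by norm_num) hS)
          (pow_le_pow_of_le_one (exp_nonneg _) (by simp) hD) (by positivity) (by positivity)
    _ ≤ (∏ u ∈ S, ∏ i ∈ A, missProb (B u) i) * ∏ u ∈ D, ∏ i ∈ A, missProb (B u) i :=
        mul_le_mul hSprod hDprod (by positivity)
          (prod_nonneg fun _ _ => prod_nonneg fun _ _ => missProb_nonneg _ _)
    _ = ∏ i ∈ A, ∏ u ∈ S ∪ D, missProb (B u) i := by rw [← prod_union hSD, prod_comm]

end MissProb

theorem prob_becomes_happy_general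
    {Ω : Type*} [MeasureSpace Ω] [IsProbabilityMeasure (ℙ : Measure Ω)]
    (k : ℕ) (A : Finset (Fin k)) (hA : A.Nonempty)
    (i₀ : Fin k)
    (U : Type*) [DecidableEq U] (S D : Finset U) (hSD : Disjoint S D)
    (hS : S.card ≤ A.card) (hD : D.card ≤ 5 * A.card)
    (Au : U → Finset (Fin k)) (h2 : ∀ u ∈ S ∪ D, 2 ≤ (Au u).card)
    (hDau : ∀ u ∈ D, i₀ ∉ Au u ∧ ∃ j ∈ Au u, j ∉ A)
    (I : Ω → Fin k) (c : U → Ω → Fin k)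
    (hmeasI : Measurable I) (hmeasc : ∀ u, Measurable (c u))
    (hindep : iIndepFun
      (fun o : Option U => o.elim I c) ℙ)
    (hunifI : ∀ a : Fin k,
      ℙ {ω | I ω = a} = if a ∈ A then (A.card : ℝ≥0∞)⁻¹ else 0)
    (hunifc : ∀ u ∈ S ∪ D, ∀ a : Fin k,
      ℙ {ω | c u ω = a} = if a ∈ Au u then ((Au u).card : ℝ≥0∞)⁻¹ else 0) :
    1 / (4 * Real.exp 5) ≤
      (ℙ {ω | ∀ u ∈ S ∪ D, c u ω ≠ I ω}).toReal := by
  have hI_real (i : Fin k) :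
      Measure.real ℙ {ω | I ω = i} = if i ∈ A then (#A : ℝ)⁻¹ else 0 := by
    rw [measureReal_def, hunifI]
    split_ifs <;> simp
  have hc_real : ∀ u ∈ S ∪ D, ∀ i, 1 - Measure.real ℙ {ω | c u ω = i} = missProb (Au u) i := by
    intro u hu i
    rw [measureReal_def, hunifc u hu, missProb]
    split_ifs <;> simp
  have hsum : Measure.real ℙ {ω | ∀ u ∈ S ∪ D, c u ω ≠ I ω} =
      ∑ i ∈ A, (#A : ℝ)⁻¹ * ∏ u ∈ S ∪ D, missProb (Au u) i := by
    rw [hindep.measureReal_forall_ne_eq_sum hmeasI hmeasc, ← sum_subset (subset_univ A)]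
    · refine sum_congr rfl fun i hi => ?_
      rw [hI_real, if_pos hi, prod_congr rfl fun u hu => hc_real u hu i]
    · intro i _ hi
      rw [hI_real, if_neg hi, zero_mul]
  rw [one_div, ← measureReal_def, hsum]
  exact inv_four_mul_exp_five_le_sum_prod_missProb hA hSD hS hD
    (fun u hu => h2 u (mem_union_left D hu)) fun u hu => not_subset.2 (hDau u hu).2

/-- Probabilistic content of Lemma 2: with `I` uniform on `A ∋ i₀`, the `c u`
uniform on `A u` (`|A u| ≥ 2`), all independent, `|S| ≤ |A|`, `|D| ≤ 5|A|`, and each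
`u ∈ D` satisfying `i₀ ∉ A u` and `A u ⊄ A`, the probability that no `c u`
(for `u ∈ S ∪ D`) equals `I` is at least `1/(4e^5)`. -/
theorem prob_becomes_happy
    {Ω : Type*} [MeasureSpace Ω] [IsProbabilityMeasure (ℙ : Measure Ω)]
    (k : ℕ) (hk : 1 ≤ k) (A : Finset (Fin k)) (hA : A.Nonempty)
    (i₀ : Fin k) (hi₀ : i₀ ∈ A)
    (U : Type*) [DecidableEq U] (S D : Finset U) (hSD : Disjoint S D)
    (hS : S.card ≤ A.card) (hD : D.card ≤ 5 * A.card)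
    (Au : U → Finset (Fin k)) (h2 : ∀ u ∈ S ∪ D, 2 ≤ (Au u).card)
    (hDau : ∀ u ∈ D, i₀ ∉ Au u ∧ ∃ j ∈ Au u, j ∉ A)
    (I : Ω → Fin k) (c : U → Ω → Fin k)
    (hmeasI : Measurable I) (hmeasc : ∀ u, Measurable (c u))
    (hindep : iIndepFun
      (fun o : Option U => o.elim I c) ℙ)
    (hunifI : ∀ a : Fin k,
      ℙ {ω | I ω = a} = if a ∈ A then (A.card : ℝ≥0∞)⁻¹ else 0)
    (hunifc : ∀ u ∈ S ∪ D, ∀ a : Fin k,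
      ℙ {ω | c u ω = a} = if a ∈ Au u then ((Au u).card : ℝ≥0∞)⁻¹ else 0) :
    1 / (4 * Real.exp 5) ≤
      (ℙ {ω | ∀ u ∈ S ∪ D, c u ω ≠ I ω}).toReal :=
  prob_becomes_happy_general k A hA i₀ U S D hSD hS hD Au h2 hDau I c hmeasI hmeasc hindep hunifI
    hunifc
end
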